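/- arXiv:1103.5723 — 4 statements merged into one kernel-verified Lean document; each statement's English description precedes it below -/
import Mathlib

section
/- Let R be a commutative ring, M an R-module, and let ω₀, ω₁, …, ω_n be elements of M. Then in the exterior algebra Λ_R M the alternating sum of the (n)-fold wedge products omitting one factor at a time equals a single product of differences: ∑_{i=0}^{n} (−1)^i · ι(ω₀) ∧ ⋯ ∧ \widehat{ι(ω_i)} ∧ ⋯ ∧ ι(ω_n) = ι(ω₁ − ω₀) ∧ ι(ω₂ − ω₀) ∧ ⋯ ∧ ι(ω_n − ω₀), where the hat denotes a deleted factor. -/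
/-!
Write `∂ω` for the left-hand side. Splitting off the term that omits the first vertex gives
`∂ (a, ω) = ι ω₁ ∧ ⋯ ∧ ι ωₙ - ι a ∧ ∂ω`. With this recursion, induction on `n` reduces the claim
to the two relations `ι a ∧ ι b = -(ι b ∧ ι a)` and `ι a ∧ ι a = 0`.
-/

namespace ExteriorAlgebra

variable {R : Type*} [CommRing R] {M : Type*} [AddCommGroup M] [Module R M]

variable (R) in
/-- The empty tuple has boundary `0`, so that `wedgeBoundary_cons` holds for every `n`. -/
def wedgeBoundary : {n : ℕ} → (Fin n → M) → ExteriorAlgebra R M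
  | 0, _ => 0
  | n + 1, ω => ∑ i : Fin (n + 1), (-1 : R) ^ (i : ℕ) • ιMulti R n (i.removeNth ω)

theorem wedgeBoundary_cons {n : ℕ} (a : M) (ω : Fin n → M) :
    wedgeBoundary R (Fin.cons a ω : Fin (n + 1) → M) =
      ιMulti R n ω - ι R a * wedgeBoundary R ω := by
  rw [wedgeBoundary, Fin.sum_univ_succ]
  cases n with
  | zero => simp [wedgeBoundary]
  | succ n =>
    have hface (i : Fin (n + 1)) :
        Fin.removeNth i.succ (Fin.cons a ω : Fin (n + 2) → M) = Fin.cons a (i.removeNth ω) := by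
      ext j
      cases j using Fin.cases <;> simp [Fin.removeNth_apply, Fin.succ_succAbove_succ]
    simp only [wedgeBoundary, hface, ιMulti_succ_apply]
    simp [Finset.mul_sum, pow_succ, Matrix.vecTail, sub_eq_add_neg, Function.comp_def]

theorem wedgeBoundary_cons_eq_ιMulti_sub {n : ℕ} (a : M) (ω : Fin n → M) :
    wedgeBoundary R (Fin.cons a ω : Fin (n + 1) → M) = ιMulti R n (fun j => ω j - a) := by
  induction n with
  | zero => simp [wedgeBoundary]
  | succ n ih =>
    obtain ⟨b, ω, rfl⟩ : ∃ b ω', Fin.cons b ω' = ω := ⟨_, _, Fin.cons_self_tail ω⟩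
    have hba : ι R a * ι R b = -(ι R b * ι R a) :=
      eq_neg_of_add_eq_zero_left (ι_add_mul_swap a b)
    calc wedgeBoundary R (Fin.cons a (Fin.cons b ω) : Fin (n + 2) → M)
        = ι R b * ιMulti R n ω - ι R a * (ιMulti R n ω - ι R b * wedgeBoundary R ω) := by
          rw [wedgeBoundary_cons, wedgeBoundary_cons, ιMulti_succ_apply]; rfl
      _ = ι R (b - a) * (ιMulti R n ω - ι R a * wedgeBoundary R ω) := by
          simp only [mul_sub, sub_mul, map_sub, ← mul_assoc, hba, ι_sq_zero, zero_mul, neg_mul]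
          abel
      _ = ιMulti R (n + 1) (fun j => (Fin.cons b ω : Fin (n + 1) → M) j - a) := by
          rw [← wedgeBoundary_cons, ih, ιMulti_succ_apply]; rfl

end ExteriorAlgebra

/-- For elements `ω 0, …, ω n` of an `R`-module `M`, in the exterior
algebra `Λ_R M` the alternating sum of the `n`-fold wedge products omitting one factor
at a time equals the single wedge product of the differences `ω i - ω 0`. -/
theorem alternating_sum_wedge_eq_wedge_sub
    (R : Type*) [CommRing R] (M : Type*) [AddCommGroup M] [Module R M]
    (n : ℕ) (ω : Fin (n + 1) → M) :
    ∑ i : Fin (n + 1), (-1 : R) ^ (i : ℕ) •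
        (List.ofFn fun j : Fin n => ExteriorAlgebra.ι R (ω (i.succAbove j))).prod
      = (List.ofFn fun j : Fin n => ExteriorAlgebra.ι R (ω j.succ - ω 0)).prod := by
  have h := ExteriorAlgebra.wedgeBoundary_cons_eq_ιMulti_sub (R := R) (ω 0) (Fin.tail ω)
  rwa [Fin.cons_self_tail] at h
end

section
/- Let R be a commutative ring, A a commutative R-algebra, M an A-module, d : A → M an R-linear derivation, and ∇ : A → M a connection relative to d. Then for any units s₀, s₁, …, s_n ∈ Aˣ one has, in the exterior algebra Λ_A M: ∑_{i=0}^{n} (−1)^i · s_i • (ι(∇s₀) ∧ ⋯ ∧ \widehat{ι(∇s_i)} ∧ ⋯ ∧ ι(∇s_n)) = (s₀·s₁·⋯·s_n) • (ι(dlog(s₁·s₀⁻¹)) ∧ ι(dlog(s₂·s₀⁻¹)) ∧ ⋯ ∧ ι(dlog(s_n·s₀⁻¹))). In particular the left-hand side does not involve ∇ except through d. -/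
/-!
For a unit `u`, the Leibniz rule of `∇` at `u * 1` gives `∇ u = u • (∇ 1 + dlog u)`. Hence each
`ι (∇ s_j)` is `s_j • ι w_j` with `w_j = ∇ 1 + dlog s_j`, and pulling the scalars out of every
wedge product leaves `(∏ s_j) • ∑ (-1)^i ι w_0 ∧ ⋯ ∧ \widehat{ι w_i} ∧ ⋯ ∧ ι w_n`. For any
alternating map this alternating sum of faces equals its value at the differences `w_j - w_0`
(induction on `n`, splitting off the first argument), and `w_j - w_0 = dlog (s_j * s_0⁻¹)`.
-/

namespace AlternatingMap

variable {R M N : Type*} [CommRing R] [AddCommGroup M] [Module R M] [AddCommGroup N] [Module R N]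
  {n : ℕ}

theorem map_vecCons_add_const (f : M [⋀^Fin (n + 1)]→ₗ[R] N) (v : M) (g : Fin n → M) :
    f (Matrix.vecCons v fun j => g j + v) = f (Matrix.vecCons v g) := by
  classical
  rw [← curryLeft_apply_apply, show (fun j => g j + v) = g + fun _ => v from rfl, map_add_univ,
    Finset.sum_eq_single Finset.univ]
  · simp [curryLeft_apply_apply]
  · intro t _ ht
    obtain ⟨j, hj⟩ : ∃ j, j ∉ t := by simpa [Finset.eq_univ_iff_forall] using ht
    rw [curryLeft_apply_apply]
    exact f.map_eq_zero_of_eq _ (i := 0) (j := j.succ) (by simp [hj]) (Fin.succ_ne_zero j).symm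
  · simp

theorem map_vecCons_sub_sub (f : M [⋀^Fin (n + 1)]→ₗ[R] N) (a b : M) (c : Fin n → M) :
    f (Matrix.vecCons (b - a) fun j => c j - a)
      = f (Matrix.vecCons b c) - f (Matrix.vecCons a fun j => c j - b) := by
  have shift_a : (fun j => c j - a) = fun j => (c j - b) + (b - a) := by
    funext j; abel
  have shift_b : f (Matrix.vecCons b c) = f (Matrix.vecCons b fun j => c j - b) := by
    rw [← map_vecCons_add_const f b fun j => c j - b]
    simp only [sub_add_cancel]
  rw [shift_a, map_vecCons_add_const, shift_b, sub_eq_add_neg b a, map_vecCons_add,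
    ← neg_one_smul R a, map_vecCons_smul, neg_one_smul, ← sub_eq_add_neg]

theorem sum_neg_one_pow_smul_map_succAbove :
    ∀ {n : ℕ} (f : M [⋀^Fin n]→ₗ[R] N) (w : Fin (n + 1) → M),
      ∑ i : Fin (n + 1), (-1 : R) ^ (i : ℕ) • f (w ∘ i.succAbove) = f fun j => w j.succ - w 0
  | 0, f, w => by simp [Subsingleton.elim (w ∘ Fin.succ) fun j => w j.succ - w 0]
  | n + 1, f, w => by
    have ih := sum_neg_one_pow_smul_map_succAbove (f.curryLeft (w 0)) (w ∘ Fin.succ)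
    simp only [curryLeft_apply_apply, Function.comp_apply, Fin.succ_zero_eq_one] at ih
    have face_zero : w ∘ Fin.succAbove 0 = Matrix.vecCons (w 1) fun j => w j.succ.succ := by
      funext j
      cases j using Fin.cases <;> rfl
    have face_succ (i : Fin (n + 1)) :
        w ∘ i.succ.succAbove = Matrix.vecCons (w 0) ((w ∘ Fin.succ) ∘ i.succAbove) := by
      funext j
      cases j using Fin.cases <;> simp [Fin.succ_succAbove_succ]
    have differences : (fun j => w j.succ - w 0)
        = Matrix.vecCons (w 1 - w 0) fun j => w j.succ.succ - w 0 := by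
      funext j
      cases j using Fin.cases <;> rfl
    rw [Fin.sum_univ_succ]
    simp only [face_zero, face_succ, Fin.val_zero, pow_zero, one_smul, Fin.val_succ, pow_succ,
      mul_neg_one, neg_smul, Finset.sum_neg_distrib]
    rw [ih, differences, map_vecCons_sub_sub, sub_eq_add_neg]

end AlternatingMap

namespace Derivation

variable {R A M : Type*} [CommRing R] [CommRing A] [Algebra R A]
  [AddCommGroup M] [Module R M] [Module A M]

theorem units_inv_smul_map_mul_inv (d : Derivation R A M) (u v : Aˣ) :
    (↑(u * v⁻¹)⁻¹ : A) • d ↑(u * v⁻¹) = (↑u⁻¹ : A) • d u - (↑v⁻¹ : A) • d v := by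
  rw [mul_inv_rev, inv_inv, Units.val_mul, Units.val_mul, d.leibniz,
    d.leibniz_of_mul_eq_one v.inv_mul]
  simp only [smul_add, smul_smul]
  have hu : (u : A) * ↑u⁻¹ = 1 := u.mul_inv
  have hv : (v : A) * ↑v⁻¹ = 1 := v.mul_inv
  rw [show (v : A) * ↑u⁻¹ * (↑u * -↑v⁻¹ ^ 2) = -↑v⁻¹ by
      linear_combination -(↑v⁻¹ * (v : A) * ↑v⁻¹) * hu - ↑v⁻¹ * hv,
    show (v : A) * ↑u⁻¹ * ↑v⁻¹ = ↑u⁻¹ by linear_combination (↑u⁻¹ : A) * hv, neg_smul]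
  abel

theorem eq_smul_add_units_inv_smul {d : Derivation R A M} {nabla : A → M}
    (h_leibniz : ∀ a b : A, nabla (a * b) = a • nabla b + b • d a) (u : Aˣ) :
    nabla u = (u : A) • (nabla 1 + (↑u⁻¹ : A) • d u) := by
  rw [smul_add, smul_smul, u.mul_inv, one_smul, ← one_smul A (d u), ← h_leibniz, mul_one]

end Derivation

theorem alternating_wedge_connection_eq_prod_smul_dlog_general
    (R A M : Type*) [CommRing R] [CommRing A] [Algebra R A]
    [AddCommGroup M] [Module R M] [Module A M]
    (d : Derivation R A M) (nabla : A → M)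
    (h_leibniz : ∀ a b : A, nabla (a * b) = a • nabla b + b • d a)
    (n : ℕ) (s : Fin (n + 1) → Aˣ) :
    ∑ i : Fin (n + 1), (-1 : A) ^ (i : ℕ) • ((s i : A) •
        (List.ofFn fun j : Fin n =>
          ExteriorAlgebra.ι A (nabla (s (i.succAbove j) : A))).prod)
      = (∏ i : Fin (n + 1), (s i : A)) •
          (List.ofFn fun j : Fin n =>
            ExteriorAlgebra.ι A
              ((↑(s j.succ * (s 0)⁻¹)⁻¹ : A) • d (↑(s j.succ * (s 0)⁻¹) : A))).prod := by
  set w : Fin (n + 1) → M := fun k => nabla 1 + (↑(s k)⁻¹ : A) • d (s k)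
  have face (i : Fin (n + 1)) :
      (s i : A) • ExteriorAlgebra.ιMulti A n (fun j => nabla (s (i.succAbove j)))
        = (∏ k, (s k : A)) • ExteriorAlgebra.ιMulti A n (w ∘ i.succAbove) := by
    simp only [Derivation.eq_smul_add_units_inv_smul h_leibniz, AlternatingMap.map_smul_univ,
      smul_smul]
    rw [Fin.prod_univ_succAbove _ i]
    rfl
  simp only [← ExteriorAlgebra.ιMulti_apply, face, smul_comm _ (∏ k, (s k : A)),
    ← Finset.smul_sum]
  rw [AlternatingMap.sum_neg_one_pow_smul_map_succAbove]
  simp only [Derivation.units_inv_smul_map_mul_inv, w, add_sub_add_left_eq_sub]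

/-- Let `d : A → M` be an `R`-linear derivation and `nabla : A → M` a
connection relative to `d`. For units `s 0, …, s n : Aˣ`, in the exterior algebra `Λ_A M`:
`∑ i, (−1)^i • s i • (wedge of the ι (nabla (s j)) omitting j = i)`
`= (s 0 ⋯ s n) • ι (dlog (s 1 · (s 0)⁻¹)) ∧ ⋯ ∧ ι (dlog (s n · (s 0)⁻¹))`,
where `dlog u := u⁻¹ • d u`; in particular the left-hand side does not involve `nabla`
except through `d`. -/
theorem alternating_wedge_connection_eq_prod_smul_dlog
    (R A M : Type*) [CommRing R] [CommRing A] [Algebra R A]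
    [AddCommGroup M] [Module R M] [Module A M]
    (d : Derivation R A M) (nabla : A → M)
    (h_add : ∀ a b : A, nabla (a + b) = nabla a + nabla b)
    (h_leibniz : ∀ a b : A, nabla (a * b) = a • nabla b + b • d a)
    (n : ℕ) (s : Fin (n + 1) → Aˣ) :
    ∑ i : Fin (n + 1), (-1 : A) ^ (i : ℕ) • ((s i : A) •
        (List.ofFn fun j : Fin n =>
          ExteriorAlgebra.ι A (nabla (s (i.succAbove j) : A))).prod)
      = (∏ i : Fin (n + 1), (s i : A)) •
          (List.ofFn fun j : Fin n =>
            ExteriorAlgebra.ι A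
              ((↑(s j.succ * (s 0)⁻¹)⁻¹ : A) • d (↑(s j.succ * (s 0)⁻¹) : A))).prod :=
  alternating_wedge_connection_eq_prod_smul_dlog_general R A M d nabla h_leibniz n s
end

section
/- Let R be a commutative ring, A a commutative R-algebra, M an A-module, and d : A → M an R-linear derivation. Let ∇₁ and ∇₂ both be connections relative to d. Then for any units s₀, s₁, …, s_n ∈ Aˣ the expressions ∑_{i=0}^{n} (−1)^i · s_i • (ι(∇s₀) ∧ ⋯ ∧ \widehat{ι(∇s_i)} ∧ ⋯ ∧ ι(∇s_n)) computed with ∇ = ∇₁ and with ∇ = ∇₂ are equal in Λ_A M: the expression is independent of the choice of connection relative to d. -/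
/-!
The Leibniz rule with `b = 1` gives `∇ a = a • ∇ 1 + d a`, so `∇₁ a = ∇₂ a + a • m` with
`m = ∇₁ 1 - ∇₂ 1`. With `v j = (∇₂ (s j), s j) ∈ M × A`, the alternating sum for `∇₂` (resp. `∇₁`)
is the image of the contraction `snd ⌋ (v 0 ∧ ⋯ ∧ v n)` under `⋀ fst` (resp. `⋀ (fst + snd • m)`).
Since `⋀ (f + φ • u) x = ⋀ f x + u ∧ ⋀ f (φ ⌋ x)` and `φ ⌋ φ ⌋ x = 0`, the two images agree.
-/

namespace CliffordAlgebra

variable {R M : Type*} [CommRing R] [AddCommGroup M] [Module R M] {Q : QuadraticForm R M}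

theorem contractLeft_prod_ofFn_ι (d : Module.Dual R M) :
    ∀ {n : ℕ} (v : Fin (n + 1) → M),
      contractLeft d (List.ofFn fun j => ι Q (v j)).prod =
        ∑ i : Fin (n + 1), (-1 : R) ^ (i : ℕ) •
          (d (v i) • (List.ofFn fun j : Fin n => ι Q (v (i.succAbove j))).prod)
  | 0, v => by
    simp [contractLeft_ι, Algebra.algebraMap_eq_smul_one]
  | n + 1, v => by
    rw [List.ofFn_succ, List.prod_cons, contractLeft_ι_mul, contractLeft_prod_ofFn_ι d,
      Fin.sum_univ_succ (n := n + 1), Finset.mul_sum, sub_eq_add_neg, ← Finset.sum_neg_distrib]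
    congr 1
    · simp
    · refine Finset.sum_congr rfl fun i _ => ?_
      rw [List.ofFn_succ, List.prod_cons]
      simp only [Fin.succ_succAbove_zero, Fin.succ_succAbove_succ, Fin.val_succ, pow_succ,
        mul_smul_comm, mul_neg_one, neg_smul]

end CliffordAlgebra

namespace ExteriorAlgebra

variable {R M N : Type*} [CommRing R] [AddCommGroup M] [Module R M] [AddCommGroup N] [Module R N]

theorem map_add_smulRight (f : N →ₗ[R] M) (φ : Module.Dual R N) (u : M)
    (x : ExteriorAlgebra R N) :
    map (f + φ.smulRight u) x = map f x + ι R u * map f (CliffordAlgebra.contractLeft φ x) := by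
  induction x using CliffordAlgebra.left_induction with
  | algebraMap r => simp [CliffordAlgebra.contractLeft_algebraMap]
  | add x y hx hy => simp only [map_add, hx, hy, mul_add]; abel
  | ι_mul x v hx =>
    have hι : ∀ a b : M, ι R a * ι R b = -(ι R b * ι R a) :=
      fun a b => eq_neg_of_add_eq_zero_left (ι_add_mul_swap a b)
    rw [CliffordAlgebra.contractLeft_ι_mul]
    simp only [map_mul, map_apply_ι, hx, LinearMap.add_apply, LinearMap.smulRight_apply,
      map_add, map_smul, map_sub, mul_add, add_mul, mul_sub, smul_mul_assoc, mul_smul_comm]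
    rw [← mul_assoc (ι R u) (ι R u), ι_sq_zero, zero_mul, smul_zero, ← mul_assoc, hι, neg_mul,
      mul_assoc]
    abel

theorem map_contractLeft_prod_ofFn_ι (g : N →ₗ[R] M) (φ : Module.Dual R N) {n : ℕ}
    (v : Fin (n + 1) → N) :
    map g (CliffordAlgebra.contractLeft φ (List.ofFn fun j => ι R (v j)).prod) =
      ∑ i : Fin (n + 1), (-1 : R) ^ (i : ℕ) •
        (φ (v i) • (List.ofFn fun j : Fin n => ι R (g (v (i.succAbove j)))).prod) := by
  rw [CliffordAlgebra.contractLeft_prod_ofFn_ι]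
  simp [map_list_prod, List.map_ofFn, Function.comp_def]

end ExteriorAlgebra

theorem alternating_wedge_connection_independent_general
    (R A M : Type*) [CommRing R] [CommRing A] [Algebra R A]
    [AddCommGroup M] [Module R M] [Module A M]
    (d : Derivation R A M) (nabla₁ nabla₂ : A → M)
    (h_leibniz₁ : ∀ a b : A, nabla₁ (a * b) = a • nabla₁ b + b • d a)
    (h_leibniz₂ : ∀ a b : A, nabla₂ (a * b) = a • nabla₂ b + b • d a)
    (n : ℕ) (s : Fin (n + 1) → Aˣ) :
    ∑ i : Fin (n + 1), (-1 : A) ^ (i : ℕ) • ((s i : A) •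
        (List.ofFn fun j : Fin n =>
          ExteriorAlgebra.ι A (nabla₁ (s (i.succAbove j) : A))).prod)
      = ∑ i : Fin (n + 1), (-1 : A) ^ (i : ℕ) • ((s i : A) •
          (List.ofFn fun j : Fin n =>
            ExteriorAlgebra.ι A (nabla₂ (s (i.succAbove j) : A))).prod) := by
  set m := nabla₁ 1 - nabla₂ 1
  have h_diff (a : A) : nabla₁ a = nabla₂ a + a • m := by
    have h₁ := h_leibniz₁ a 1
    have h₂ := h_leibniz₂ a 1
    rw [mul_one, one_smul] at h₁ h₂
    rw [h₁, h₂, smul_sub]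
    abel
  set φ : Module.Dual A (M × A) := LinearMap.snd A M A
  set ω := (List.ofFn fun j => ExteriorAlgebra.ι A (nabla₂ (s j : A), (s j : A))).prod
  calc _ = ExteriorAlgebra.map (LinearMap.fst A M A + φ.smulRight m)
          (CliffordAlgebra.contractLeft φ ω) := by
        rw [ExteriorAlgebra.map_contractLeft_prod_ofFn_ι]
        simp [φ, h_diff]
    _ = ExteriorAlgebra.map (LinearMap.fst A M A) (CliffordAlgebra.contractLeft φ ω) := by
        rw [ExteriorAlgebra.map_add_smulRight, CliffordAlgebra.contractLeft_contractLeft,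
          map_zero, mul_zero, add_zero]
    _ = _ := by
        rw [ExteriorAlgebra.map_contractLeft_prod_ofFn_ι]
        simp [φ]

/-- Let `d : A → M` be an `R`-linear derivation and let `nabla₁`, `nabla₂`
both be connections relative to `d`. Then for units `s 0, …, s n : Aˣ` the alternating
expressions `∑ i, (−1)^i • s i • (wedge of the ι (nabla (s j)) omitting j = i)` computed
with `nabla = nabla₁` and with `nabla = nabla₂` are equal in `Λ_A M`: the expression is
independent of the choice of connection relative to `d`. -/
theorem alternating_wedge_connection_independent
    (R A M : Type*) [CommRing R] [CommRing A] [Algebra R A]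
    [AddCommGroup M] [Module R M] [Module A M]
    (d : Derivation R A M) (nabla₁ nabla₂ : A → M)
    (h_add₁ : ∀ a b : A, nabla₁ (a + b) = nabla₁ a + nabla₁ b)
    (h_leibniz₁ : ∀ a b : A, nabla₁ (a * b) = a • nabla₁ b + b • d a)
    (h_add₂ : ∀ a b : A, nabla₂ (a + b) = nabla₂ a + nabla₂ b)
    (h_leibniz₂ : ∀ a b : A, nabla₂ (a * b) = a • nabla₂ b + b • d a)
    (n : ℕ) (s : Fin (n + 1) → Aˣ) :
    ∑ i : Fin (n + 1), (-1 : A) ^ (i : ℕ) • ((s i : A) •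
        (List.ofFn fun j : Fin n =>
          ExteriorAlgebra.ι A (nabla₁ (s (i.succAbove j) : A))).prod)
      = ∑ i : Fin (n + 1), (-1 : A) ^ (i : ℕ) • ((s i : A) •
          (List.ofFn fun j : Fin n =>
            ExteriorAlgebra.ι A (nabla₂ (s (i.succAbove j) : A))).prod) :=
  alternating_wedge_connection_independent_general R A M d nabla₁ nabla₂ h_leibniz₁ h_leibniz₂ n s
end

section
/- Let R be a commutative ring, A a commutative R-algebra, M an A-module, d : A → M an R-linear derivation, and ∇ : A → M a connection relative to d. Then for any units s₀, s₁, …, s_n ∈ Aˣ and any unit t ∈ Aˣ, the expression ∑_{i=0}^{n} (−1)^i · s_i • (ι(∇s₀) ∧ ⋯ ∧ \widehat{ι(∇s_i)} ∧ ⋯ ∧ ι(∇s_n)) is homogeneous of degree n+1 under simultaneous rescaling: ∑_{i=0}^{n} (−1)^i · (t·s_i) • (ι(∇(t·s₀)) ∧ ⋯ ∧ \widehat{ι(∇(t·s_i))} ∧ ⋯ ∧ ι(∇(t·s_n))) = t^{n+1} • ∑_{i=0}^{n} (−1)^i · s_i • (ι(∇s₀) ∧ ⋯ ∧ \widehat{ι(∇s_i)}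 ∧ ⋯ ∧ ι(∇s_n)). -/
/-!
Write `F(c, v) = alternatingContract c v = ∑ᵢ (-1)ⁱ cᵢ • v₀ ∧ ⋯ ∧ v̂ᵢ ∧ ⋯ ∧ vₙ`. The Leibniz
rule gives `∇(t sᵢ) = t • (∇sᵢ + sᵢ • u)` with `u = t⁻¹ • d t`, so the left-hand side is
`F(t s, t (∇s + s u)) = t ^ (n + 1) • F(s, ∇s + s u)`. Finally `F(c, v + c u) = F(c, v)`:
expanding the wedges, the terms containing `u` cancel in pairs; by induction on `n` this goes
together with `v₀ ∧ ⋯ ∧ vₙ` turning into `v₀ ∧ ⋯ ∧ vₙ + u ∧ F(c, v)` under the same substitution.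
-/

open ExteriorAlgebra

namespace ExteriorAlgebra

variable {A M : Type*} [CommRing A] [AddCommGroup M] [Module A M]

noncomputable def alternatingContract {n : ℕ} (c : Fin (n + 1) → A) (v : Fin (n + 1) → M) :
    ExteriorAlgebra A M :=
  ∑ i : Fin (n + 1), (-1 : A) ^ (i : ℕ) • c i • ιMulti A n (v ∘ i.succAbove)

lemma alternatingContract_zero (c : Fin 1 → A) (v : Fin 1 → M) :
    alternatingContract c v = c 0 • 1 := by
  simp [alternatingContract]

lemma alternatingContract_succ {n : ℕ} (c : Fin (n + 2) → A) (v : Fin (n + 2) → M) :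
    alternatingContract c v = c 0 • ιMulti A (n + 1) (v ∘ Fin.succ)
      - ι A (v 0) * alternatingContract (c ∘ Fin.succ) (v ∘ Fin.succ) := by
  rw [alternatingContract, Fin.sum_univ_succ, alternatingContract, Finset.mul_sum,
    sub_eq_add_neg, ← Finset.sum_neg_distrib]
  congr 1
  · simp
  refine Finset.sum_congr rfl fun i _ => ?_
  have hdrop : v ∘ i.succ.succAbove = Fin.cons (v 0) (v ∘ Fin.succ ∘ i.succAbove) := by
    ext j
    cases j using Fin.cases <;> simp [Fin.succ_succAbove_succ]
  rw [hdrop, ιMulti_succ_apply]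
  simp only [Fin.cons_zero, Matrix.vecTail, Function.comp_apply, Fin.val_succ,
    pow_succ, mul_smul_comm, mul_comm _ (-1 : A), mul_smul, neg_one_smul]
  rfl

lemma ιMulti_add_smul {n : ℕ} (c : Fin (n + 1) → A) (v : Fin (n + 1) → M) (w : M) :
    ιMulti A (n + 1) (fun j => v j + c j • w)
      = ιMulti A (n + 1) v + ι A w * alternatingContract c v := by
  induction n with
  | zero =>
    simp [alternatingContract_zero]
  | succ n ih =>
    have hswap : ι A (v 0) * ι A w = -(ι A w * ι A (v 0)) :=
      eq_neg_of_add_eq_zero_left (ι_add_mul_swap (v 0) w)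
    rw [ιMulti_succ_apply (v := fun j => v j + c j • w), ιMulti_succ_apply (v := v),
      alternatingContract_succ]
    simp only [Matrix.vecTail, Function.comp_def]
    rw [ih (fun j => c j.succ) (fun j => v j.succ)]
    simp only [map_add, map_smul, add_mul, mul_add, smul_mul_assoc, ← mul_assoc, ι_sq_zero,
      smul_zero, add_zero, hswap, neg_mul, mul_sub, mul_smul_comm]
    abel

lemma alternatingContract_add_smul {n : ℕ} (c : Fin (n + 1) → A) (v : Fin (n + 1) → M)
    (w : M) : alternatingContract c (fun j => v j + c j • w) = alternatingContract c v := by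
  induction n with
  | zero => simp [alternatingContract_zero]
  | succ n ih =>
    rw [alternatingContract_succ, alternatingContract_succ]
    simp only [Function.comp_def]
    rw [ih (fun j => c j.succ) (fun j => v j.succ), ιMulti_add_smul]
    simp only [map_add, map_smul, add_mul, smul_add, smul_mul_assoc]
    abel

lemma alternatingContract_smul {n : ℕ} (t : A) (c : Fin (n + 1) → A) (v : Fin (n + 1) → M) :
    alternatingContract (t • c) (t • v) = t ^ (n + 1) • alternatingContract c v := by
  rw [alternatingContract, alternatingContract, Finset.smul_sum]
  refine Finset.sum_congr rfl fun i _ => ?_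
  have hmulti : ιMulti A n ((t • v) ∘ i.succAbove) = t ^ n • ιMulti A n (v ∘ i.succAbove) := by
    have := (ιMulti A n).map_smul_univ (fun _ => t) (v ∘ i.succAbove)
    rwa [Finset.prod_const, Finset.card_univ, Fintype.card_fin] at this
  rw [hmulti, Pi.smul_apply, smul_eq_mul, smul_smul, smul_smul, smul_smul, smul_smul]
  congr 1
  ring

end ExteriorAlgebra

theorem alternating_wedge_connection_homogeneous_general
    (R A M : Type*) [CommRing R] [CommRing A] [Algebra R A]
    [AddCommGroup M] [Module R M] [Module A M]
    (d : Derivation R A M) (nabla : A → M)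
    (h_leibniz : ∀ a b : A, nabla (a * b) = a • nabla b + b • d a)
    (n : ℕ) (s : Fin (n + 1) → Aˣ) (t : Aˣ) :
    ∑ i : Fin (n + 1), (-1 : A) ^ (i : ℕ) • (((t : A) * (s i : A)) •
        (List.ofFn fun j : Fin n =>
          ExteriorAlgebra.ι A (nabla ((t : A) * (s (i.succAbove j) : A)))).prod)
      = (t : A) ^ (n + 1) •
          ∑ i : Fin (n + 1), (-1 : A) ^ (i : ℕ) • ((s i : A) •
            (List.ofFn fun j : Fin n =>
              ExteriorAlgebra.ι A (nabla (s (i.succAbove j) : A))).prod) := by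
  have hscale : (fun i => nabla (t * s i)) =
      (t : A) • fun i => nabla (s i) + (s i : A) • ((t⁻¹ : Aˣ) : A) • d t := by
    ext i
    rw [h_leibniz, Pi.smul_apply, smul_add, smul_smul (s i : A), smul_smul, mul_left_comm,
      Units.mul_inv, mul_one]
  calc _ = alternatingContract ((t : A) • fun i => (s i : A)) (fun i => nabla (t * s i)) := rfl
    _ = _ := by rw [hscale, alternatingContract_smul, alternatingContract_add_smul]; rfl

/-- Let `d : A → M` be an `R`-linear derivation and `nabla : A → M` a
connection relative to `d`. For units `s 0, …, s n : Aˣ` and any unit `t : Aˣ`, the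
alternating expression `∑ i, (−1)^i • s i • (wedge of the ι (nabla (s j)) omitting j = i)`
is homogeneous of degree `n + 1` under simultaneous rescaling of the `s i` by `t`. -/
theorem alternating_wedge_connection_homogeneous
    (R A M : Type*) [CommRing R] [CommRing A] [Algebra R A]
    [AddCommGroup M] [Module R M] [Module A M]
    (d : Derivation R A M) (nabla : A → M)
    (h_add : ∀ a b : A, nabla (a + b) = nabla a + nabla b)
    (h_leibniz : ∀ a b : A, nabla (a * b) = a • nabla b + b • d a)
    (n : ℕ) (s : Fin (n + 1) → Aˣ) (t : Aˣ) :
    ∑ i : Fin (n + 1), (-1 : A) ^ (i : ℕ) • (((t : A) * (s i : A)) •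
        (List.ofFn fun j : Fin n =>
          ExteriorAlgebra.ι A (nabla ((t : A) * (s (i.succAbove j) : A)))).prod)
      = (t : A) ^ (n + 1) •
          ∑ i : Fin (n + 1), (-1 : A) ^ (i : ℕ) • ((s i : A) •
            (List.ofFn fun j : Fin n =>
              ExteriorAlgebra.ι A (nabla (s (i.succAbove j) : A))).prod) :=
  alternating_wedge_connection_homogeneous_general R A M d nabla h_leibniz n s t
end
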